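/- arXiv:2605.20770 — 6 statements merged into one kernel-verified Lean document; each statement's English description precedes it below -/
import Mathlib

section
/- Let M = GΣGᵀ with Σ symmetric positive definite, Γ symmetric positive definite, λ > 0, and zλ = (M + λΓ)⁻¹y. If z ∈ ℝᵐ satisfies MΓ⁻¹(Mz − y) + λMz = 0 (i.e., z is a stationary point of J(z) = ‖Mz − y‖²_{Γ⁻¹} + λzᵀMz), then z − zλ ∈ 𝒩(M). Conversely, for any p ∈ 𝒩(M), zλ + p is also a stationary point. -/
/-! Both parts reduce to the fact that the gradient `z ↦ M B (M z - y) + l M z` of `J`, `B = Γ⁻¹`, depends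
on `z` only through `M z`, and that `z_λ` is a stationary point because
`M z_λ - y = -l Γ z_λ`. For the first part, the difference `w` of two stationary points
satisfies `M B M w + l M w = 0`; pairing with `w` gives `(M w)ᵀ B (M w) + l wᵀ M w = 0`, a sum
of a positive-definite and a nonnegative term, so `M w = 0`. -/

open Matrix

variable {ι : Type*} [Fintype ι]

section Gradient

/-- Half the gradient of `J z = ‖M z - y‖²_B + l zᵀ M z` for symmetric `M` and `B`. -/
def tikhonovGrad (M B : Matrix ι ι ℝ) (y : ι → ℝ) (l : ℝ) (z : ι → ℝ) : ι → ℝ :=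
  M *ᵥ (B *ᵥ (M *ᵥ z - y)) + l • (M *ᵥ z)

variable {M B : Matrix ι ι ℝ} {y : ι → ℝ} {l : ℝ}

lemma tikhonovGrad_sub (z z' : ι → ℝ) :
    tikhonovGrad M B y l z - tikhonovGrad M B y l z' =
      M *ᵥ (B *ᵥ (M *ᵥ (z - z'))) + l • (M *ᵥ (z - z')) := by
  simp only [tikhonovGrad, mulVec_sub, smul_sub]
  abel

lemma tikhonovGrad_add_of_mulVec_eq_zero (z : ι → ℝ) {p : ι → ℝ} (hp : M *ᵥ p = 0) :
    tikhonovGrad M B y l (z + p) = tikhonovGrad M B y l z := by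
  simp only [tikhonovGrad, mulVec_add, hp, add_zero]

lemma tikhonovGrad_inv_eq_zero_of_mulVec_eq [DecidableEq ι] {Γ : Matrix ι ι ℝ}
    (hΓ : IsUnit Γ.det) {z : ι → ℝ} (hz : (M + l • Γ) *ᵥ z = y) :
    tikhonovGrad M Γ⁻¹ y l z = 0 := by
  have hres : M *ᵥ z - y = -(l • (Γ *ᵥ z)) := by
    rw [← hz, add_mulVec, smul_mulVec]
    abel
  rw [tikhonovGrad, hres, mulVec_neg, mulVec_smul, mulVec_mulVec, nonsing_inv_mul _ hΓ,
    one_mulVec, mulVec_neg, mulVec_smul, neg_add_cancel]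

end Gradient

lemma Matrix.PosSemidef.mulVec_eq_zero_of_mulVec_posDef_mulVec_add_smul {M A : Matrix ι ι ℝ}
    (hM : M.PosSemidef) (hA : A.PosDef) {l : ℝ} (hl : 0 ≤ l) {w : ι → ℝ}
    (h : M *ᵥ (A *ᵥ (M *ᵥ w)) + l • (M *ᵥ w) = 0) : M *ᵥ w = 0 := by
  by_contra hne
  have hsymm : w ⬝ᵥ (M *ᵥ (A *ᵥ (M *ᵥ w))) = (M *ᵥ w) ⬝ᵥ (A *ᵥ (M *ᵥ w)) := by
    have hMt : Mᵀ = M := by simpa using hM.isHermitian.eq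
    rw [dotProduct_mulVec, ← hMt, vecMul_transpose, hMt]
  have hpos : 0 < (M *ᵥ w) ⬝ᵥ (A *ᵥ (M *ᵥ w)) := by
    simpa using hA.dotProduct_mulVec_pos hne
  have hnn : 0 ≤ w ⬝ᵥ (M *ᵥ w) := by simpa using hM.dotProduct_mulVec_nonneg w
  have hpair := congrArg (w ⬝ᵥ ·) h
  simp only [dotProduct_add, dotProduct_smul, dotProduct_zero, smul_eq_mul, hsymm] at hpair
  nlinarith

theorem stmt_4 {m n : ℕ} (G : Matrix (Fin m) (Fin n) ℝ)
    (S : Matrix (Fin n) (Fin n) ℝ) (hS : S.PosDef)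
    (Γ : Matrix (Fin m) (Fin m) ℝ) (hΓ : Γ.PosDef)
    (l : ℝ) (hl : 0 < l) (y : Fin m → ℝ)
    (M : Matrix (Fin m) (Fin m) ℝ) (hM : M = G * S * Gᵀ)
    (zl : Fin m → ℝ) (hzl : zl = (M + l • Γ)⁻¹ *ᵥ y) :
    (∀ z : Fin m → ℝ,
      M *ᵥ (Γ⁻¹ *ᵥ (M *ᵥ z - y)) + l • (M *ᵥ z) = 0 → M *ᵥ (z - zl) = 0) ∧
    (∀ p : Fin m → ℝ, M *ᵥ p = 0 →
      M *ᵥ (Γ⁻¹ *ᵥ (M *ᵥ (zl + p) - y)) + l • (M *ᵥ (zl + p)) = 0) := by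
  have hMpsd : M.PosSemidef := by
    simpa [hM] using hS.posSemidef.mul_mul_conjTranspose_same G
  have hreg : IsUnit (M + l • Γ).det := (PosDef.posSemidef_add hMpsd (hΓ.smul hl)).det_pos.ne'.isUnit
  have hzl_solves : (M + l • Γ) *ᵥ zl = y := by
    rw [hzl, mulVec_mulVec, mul_nonsing_inv _ hreg, one_mulVec]
  have hstat : tikhonovGrad M Γ⁻¹ y l zl = 0 :=
    tikhonovGrad_inv_eq_zero_of_mulVec_eq hΓ.det_pos.ne'.isUnit hzl_solves
  refine ⟨fun z hz => ?_, fun p hp => (tikhonovGrad_add_of_mulVec_eq_zero zl hp).trans hstat⟩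
  refine hMpsd.mulVec_eq_zero_of_mulVec_posDef_mulVec_add_smul hΓ.inv hl.le ?_
  rwa [← tikhonovGrad_sub, hstat, sub_zero]
end

section
/- Let W ∈ ℝ^{m×(k+1)} have orthonormal columns (WᵀW = I), B ∈ ℝ^{(k+1)×k}, and λ > 0. Then Wᵀ(I + λ⁻¹WBBᵀWᵀ)⁻¹W = I − B(BᵀB + λI)⁻¹Bᵀ. -/
open Matrix

theorem stmt_13 {m k : ℕ} (W : Matrix (Fin m) (Fin (k + 1)) ℝ) (hW : Wᵀ * W = 1)
    (B : Matrix (Fin (k + 1)) (Fin k) ℝ) (l : ℝ) (hl : 0 < l) :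
    Wᵀ * (1 + l⁻¹ • (W * B * Bᵀ * Wᵀ))⁻¹ * W
      = 1 - B * (Bᵀ * B + l • 1)⁻¹ * Bᵀ := by
  set C : Matrix (Fin k) (Fin k) ℝ := Bᵀ * B + l • 1 with hCdef
  have hBB : (Bᵀ * B).PosSemidef := by
    have := Matrix.posSemidef_conjTranspose_mul_self B
    simpa using this
  have hI : (l • (1 : Matrix (Fin k) (Fin k) ℝ)).PosDef := by
    rw [Matrix.smul_one_eq_diagonal]
    exact Matrix.PosDef.diagonal fun _ => hl
  have hC : C.PosDef := Matrix.PosDef.posSemidef_add hBB hI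
  have hCu : IsUnit C.det := hC.det_pos.ne'.isUnit
  have hCC : C * C⁻¹ = 1 := Matrix.mul_nonsing_inv C hCu
  have hBt : Bᵀ = Bᵀ * B * C⁻¹ * Bᵀ + l • (C⁻¹ * Bᵀ) := by
    have : (1 : Matrix (Fin k) (Fin k) ℝ) * Bᵀ = (Bᵀ * B * C⁻¹ + l • C⁻¹) * Bᵀ := by
      rw [← hCC]
      simp [hCdef, Matrix.add_mul, Matrix.smul_mul]
    simpa [Matrix.add_mul, Matrix.smul_mul, Matrix.mul_assoc] using this
  have key : (1 + l⁻¹ • (W * B * Bᵀ * Wᵀ)) * (1 - W * B * C⁻¹ * Bᵀ * Wᵀ) = 1 := by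
    have hmid : Bᵀ * Wᵀ * (W * (B * (C⁻¹ * (Bᵀ * Wᵀ)))) = Bᵀ * B * C⁻¹ * Bᵀ * Wᵀ := by
      rw [Matrix.mul_assoc Bᵀ Wᵀ, ← Matrix.mul_assoc Wᵀ W, hW]
      simp [Matrix.mul_assoc]
    rw [Matrix.mul_sub, Matrix.add_mul, Matrix.add_mul, mul_one, mul_one, one_mul,
      Matrix.smul_mul]
    have expand : W * B * Bᵀ * Wᵀ * (W * B * C⁻¹ * Bᵀ * Wᵀ)
        = W * (B * (Bᵀ * B * C⁻¹ * Bᵀ * Wᵀ)) := by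
      rw [← hmid]
      simp [Matrix.mul_assoc]
    rw [expand]
    have hX : W * B * Bᵀ * Wᵀ
        = W * (B * (Bᵀ * B * C⁻¹ * Bᵀ * Wᵀ)) + l • (W * (B * (C⁻¹ * (Bᵀ * Wᵀ)))) := by
      calc W * B * Bᵀ * Wᵀ = W * (B * (Bᵀ * Wᵀ)) := by simp [Matrix.mul_assoc]
        _ = W * (B * ((Bᵀ * B * C⁻¹ * Bᵀ + l • (C⁻¹ * Bᵀ)) * Wᵀ)) := by rw [← hBt]
        _ = _ := by
            simp [Matrix.add_mul, Matrix.mul_add, Matrix.smul_mul, Matrix.mul_smul,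
              Matrix.mul_assoc]
    rw [hX]
    have hW2 : W * B * C⁻¹ * Bᵀ * Wᵀ = W * (B * (C⁻¹ * (Bᵀ * Wᵀ))) := by
      simp [Matrix.mul_assoc]
    rw [hW2, smul_add, smul_smul, inv_mul_cancel₀ hl.ne', one_smul]
    abel
  have hInv : (1 + l⁻¹ • (W * B * Bᵀ * Wᵀ))⁻¹ = 1 - W * B * C⁻¹ * Bᵀ * Wᵀ :=
    Matrix.inv_eq_right_inv key
  rw [hInv, Matrix.mul_sub, Matrix.sub_mul, Matrix.mul_one, hW]
  congr 1
  calc Wᵀ * (W * B * C⁻¹ * Bᵀ * Wᵀ) * W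
      = (Wᵀ * W) * (B * C⁻¹ * Bᵀ) * (Wᵀ * W) := by simp only [Matrix.mul_assoc]
    _ = B * C⁻¹ * Bᵀ := by rw [hW, one_mul, mul_one]
    _ = B * (Bᵀ * B + l • 1)⁻¹ * Bᵀ := by rw [hCdef]
end

section
/- Let A₁ and A₂ be symmetric positive semidefinite matrices of the same order. Then ‖(I + A₁)⁻¹ − (I + A₂)⁻¹‖₂ ≤ ‖A₁ − A₂‖₂ / (1 + ‖A₁ − A₂‖₂), where ‖·‖₂ denotes the spectral norm. -/
open Matrix
open scoped Matrix.Norms.L2Operator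

namespace Stmt14Aux

variable {d : ℕ}

local notation "Mat" => Matrix (Fin d) (Fin d) ℝ

section SqrtAux
open scoped MatrixOrder

noncomputable def _root_.Matrix.PosSemidef.sqrt {A : Mat} (_hA : A.PosSemidef) : Mat := CFC.sqrt A

lemma _root_.Matrix.PosSemidef.sqrt_mul_self {A : Mat} (hA : A.PosSemidef) :
    hA.sqrt * hA.sqrt = A :=
  CFC.sqrt_mul_sqrt_self A hA.nonneg

lemma _root_.Matrix.PosSemidef.posSemidef_sqrt {A : Mat} (hA : A.PosSemidef) :
    hA.sqrt.PosSemidef :=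
  (CFC.sqrt_nonneg A).posSemidef

end SqrtAux

lemma herm_smul {M : Mat} (hM : M.IsHermitian) (c : ℝ) : (c • M).IsHermitian := by
  show (c • M)ᴴ = c • M
  rw [conjTranspose_smul, star_trivial, hM.eq]

lemma psd_smul {M : Mat} (hM : M.PosSemidef) {c : ℝ} (hc : 0 ≤ c) : (c • M).PosSemidef := by
  refine PosSemidef.of_dotProduct_mulVec_nonneg (herm_smul hM.1 c) fun x => ?_
  rw [smul_mulVec, dotProduct_smul, smul_eq_mul]
  exact mul_nonneg hc (hM.dotProduct_mulVec_nonneg x)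

lemma psd_smul_one {c : ℝ} (hc : 0 ≤ c) : ((c • 1 : Mat)).PosSemidef :=
  psd_smul Matrix.PosSemidef.one hc

lemma posdef_smul {M : Mat} (hM : M.PosDef) {c : ℝ} (hc : 0 < c) : (c • M).PosDef := by
  refine PosDef.of_dotProduct_mulVec_pos (herm_smul hM.1 c) fun x hx => ?_
  rw [smul_mulVec, dotProduct_smul, smul_eq_mul]
  exact mul_pos hc (hM.dotProduct_mulVec_pos hx)

lemma psd_conj {B S : Mat} (hB : B.PosSemidef) (hS : S.IsHermitian) :
    (S * B * S).PosSemidef := by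
  have := hB.conjTranspose_mul_mul_same S
  rwa [hS.eq] at this

lemma posdef_conj {M S : Mat} (hM : M.PosDef) (hS : S.IsHermitian) (hdet : IsUnit S.det) :
    (S * M * S).PosDef := by
  refine PosDef.of_dotProduct_mulVec_pos ?_ fun x hx => ?_
  · show (S * M * S)ᴴ = S * M * S
    rw [conjTranspose_mul, conjTranspose_mul, hS.eq, hM.1.eq, mul_assoc]
  · have hSx : S *ᵥ x ≠ 0 := by
      intro h
      exact hx <| (Matrix.mulVec_injective_iff_isUnit.mpr
        ((Matrix.isUnit_iff_isUnit_det S).mpr hdet)).eq_iff.mp (by simpa using h)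
    have key : star x ⬝ᵥ (S * M * S) *ᵥ x = star (S *ᵥ x) ⬝ᵥ M *ᵥ (S *ᵥ x) := by
      rw [← Matrix.mulVec_mulVec, ← Matrix.mulVec_mulVec,
        dotProduct_mulVec (star x), star_mulVec, hS.eq]
    rw [key]
    exact hM.dotProduct_mulVec_pos hSx


lemma sqrt_comm_self {A : Mat} (hA : A.PosSemidef) : hA.sqrt * A = A * hA.sqrt := by
  obtain ⟨B, hB⟩ : ∃ B, B = hA.sqrt := ⟨_, rfl⟩
  have hBB : B * B = A := by rw [hB]; exact hA.sqrt_mul_self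
  rw [← hB, ← hBB]
  exact (mul_assoc _ _ _).symm

lemma inv_one_sub {T : Mat} (hT : T.PosDef) (h : (1 - T).PosSemidef) :
    (T⁻¹ - 1).PosSemidef := by
  have hTd : IsUnit T.det := hT.det_pos.ne'.isUnit
  have hTi : T⁻¹.PosDef := hT.inv
  set R := hTi.posSemidef.sqrt with hRdef
  have hR : R.IsHermitian := hTi.posSemidef.posSemidef_sqrt.1
  have hRR : R * R = T⁻¹ := hTi.posSemidef.sqrt_mul_self
  have h1 : R * T⁻¹ = T⁻¹ * R := sqrt_comm_self hTi.posSemidef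
  have hcomm : R * T = T * R := by
    have h2 : T * (R * T⁻¹) * T = T * (T⁻¹ * R) * T := by rw [h1]
    calc R * T = T * T⁻¹ * R * T := by rw [mul_nonsing_inv _ hTd, one_mul]
      _ = T * (T⁻¹ * R) * T := by rw [mul_assoc T T⁻¹ R]
      _ = T * (R * T⁻¹) * T := by rw [h1]
      _ = T * R * (T⁻¹ * T) := by rw [mul_assoc, mul_assoc, mul_assoc]
      _ = T * R := by rw [nonsing_inv_mul _ hTd, mul_one]
  have key : R * (1 - T) * R = T⁻¹ - 1 := by
    rw [mul_sub, mul_one, sub_mul, hRR, hcomm, mul_assoc, hRR, mul_nonsing_inv _ hTd]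
  exact key ▸ psd_conj h hR

lemma inv_sub_one {T : Mat} (hT : T.PosDef) (h : (T - 1).PosSemidef) :
    (1 - T⁻¹).PosSemidef := by
  have hTd : IsUnit T.det := hT.det_pos.ne'.isUnit
  have hTi : T⁻¹.PosDef := hT.inv
  set R := hTi.posSemidef.sqrt with hRdef
  have hR : R.IsHermitian := hTi.posSemidef.posSemidef_sqrt.1
  have hRR : R * R = T⁻¹ := hTi.posSemidef.sqrt_mul_self
  have h1 : R * T⁻¹ = T⁻¹ * R := sqrt_comm_self hTi.posSemidef
  have hcomm : R * T = T * R := by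
    calc R * T = T * T⁻¹ * R * T := by rw [mul_nonsing_inv _ hTd, one_mul]
      _ = T * (T⁻¹ * R) * T := by rw [mul_assoc T T⁻¹ R]
      _ = T * (R * T⁻¹) * T := by rw [h1]
      _ = T * R * (T⁻¹ * T) := by rw [mul_assoc, mul_assoc, mul_assoc]
      _ = T * R := by rw [nonsing_inv_mul _ hTd, mul_one]
  have key : R * (T - 1) * R = 1 - T⁻¹ := by
    rw [mul_sub, mul_one, sub_mul, hRR, hcomm, mul_assoc, hRR, mul_nonsing_inv _ hTd]
  exact key ▸ psd_conj h hR

lemma inv_antitone {M N : Mat} (hM : M.PosDef) (hN : N.PosDef) (h : (N - M).PosSemidef) :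
    (M⁻¹ - N⁻¹).PosSemidef := by
  have hSS : hN.posSemidef.sqrt * hN.posSemidef.sqrt = N := hN.posSemidef.sqrt_mul_self
  set S := hN.posSemidef.sqrt with hSdef
  have hS : S.IsHermitian := hN.posSemidef.posSemidef_sqrt.1
  have hSdet : IsUnit S.det := by
    have hd : S.det * S.det = N.det := by rw [← det_mul, hSS]
    refine isUnit_iff_ne_zero.mpr fun h0 => hN.det_pos.ne' ?_
    rw [← hd, h0, mul_zero]
  have hS1 : S⁻¹ * S = 1 := nonsing_inv_mul S hSdet
  have hS2 : S * S⁻¹ = 1 := mul_nonsing_inv S hSdet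
  have hSidet : IsUnit S⁻¹.det := (isUnit_nonsing_inv_det S hSdet)
  have hNinv : S⁻¹ * S⁻¹ = N⁻¹ := by rw [← hSS, Matrix.mul_inv_rev]
  set T := S⁻¹ * M * S⁻¹ with hTdef
  have hT : T.PosDef := posdef_conj hM hS.inv hSidet
  have e1 : 1 - T = S⁻¹ * (N - M) * S⁻¹ := by
    have hone : S⁻¹ * N * S⁻¹ = 1 := by
      rw [← hSS, ← mul_assoc, nonsing_inv_mul _ hSdet, one_mul, mul_nonsing_inv _ hSdet]
    rw [mul_sub, sub_mul, hTdef, ← hone]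
  have h1T : (1 - T).PosSemidef := e1 ▸ psd_conj h hS.inv
  have hTinv : (T⁻¹ - 1).PosSemidef := inv_one_sub hT h1T
  have hTinv_eq : T⁻¹ = S * M⁻¹ * S := by
    rw [hTdef, Matrix.mul_inv_rev, Matrix.mul_inv_rev,
      nonsing_inv_nonsing_inv S hSdet, mul_assoc]
  have e2 : M⁻¹ - N⁻¹ = S⁻¹ * (T⁻¹ - 1) * S⁻¹ := by
    rw [hTinv_eq, mul_sub, sub_mul, mul_one, ← hNinv]
    congr 1
    calc M⁻¹ = 1 * M⁻¹ * 1 := by rw [one_mul, mul_one]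
      _ = (S⁻¹ * S) * M⁻¹ * (S * S⁻¹) := by rw [hS1, hS2]
      _ = S⁻¹ * (S * M⁻¹ * S) * S⁻¹ := by
        rw [mul_assoc, mul_assoc, mul_assoc, mul_assoc, mul_assoc]
  exact e2 ▸ psd_conj hTinv hS.inv

lemma dot_self_eq_norm_sq (x : Fin d → ℝ) :
    x ⬝ᵥ x = ‖(WithLp.equiv 2 (Fin d → ℝ)).symm x‖ ^ 2 := by
  have := real_inner_self_eq_norm_sq ((WithLp.equiv 2 (Fin d → ℝ)).symm x)
  rw [← this]
  rfl

lemma abs_dot_mulVec_le {M : Mat} (x : Fin d → ℝ) :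
    |x ⬝ᵥ M *ᵥ x| ≤ ‖M‖ * ‖(WithLp.equiv 2 (Fin d → ℝ)).symm x‖ ^ 2 := by
  set x' : EuclideanSpace ℝ (Fin d) := (WithLp.equiv 2 (Fin d → ℝ)).symm x with hx'
  have h1 : x ⬝ᵥ M *ᵥ x = (inner ℝ x' ((WithLp.equiv 2 (Fin d → ℝ)).symm (M *ᵥ x)) : ℝ) := by
    rw [EuclideanSpace.inner_eq_star_dotProduct, dotProduct_comm]; simp [x']
  have h2 : ‖(WithLp.equiv 2 (Fin d → ℝ)).symm (M *ᵥ x)‖ ≤ ‖M‖ * ‖x'‖ :=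
    M.l2_opNorm_mulVec x'
  calc |x ⬝ᵥ M *ᵥ x| ≤ ‖x'‖ * ‖(WithLp.equiv 2 (Fin d → ℝ)).symm (M *ᵥ x)‖ := by
        rw [h1]; exact abs_real_inner_le_norm _ _
    _ ≤ ‖x'‖ * (‖M‖ * ‖x'‖) := by
        exact mul_le_mul_of_nonneg_left h2 (norm_nonneg _)
    _ = ‖M‖ * ‖x'‖ ^ 2 := by ring

lemma psd_norm_smul_one_add {M : Mat} (hM : M.IsHermitian) :
    (‖M‖ • 1 + M).PosSemidef := by
  refine PosSemidef.of_dotProduct_mulVec_nonneg ((herm_smul isHermitian_one ‖M‖).add hM) fun x => ?_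
  have hs : star x = x := by
    funext i; exact star_trivial _
  rw [hs, add_mulVec, dotProduct_add, smul_mulVec, one_mulVec, dotProduct_smul,
    smul_eq_mul, dot_self_eq_norm_sq]
  have := abs_dot_mulVec_le (M := M) x
  have h2 := abs_le.mp this
  linarith [h2.1]

lemma norm_le_of_sandwich {D : Mat} (hD : D.IsHermitian) {c : ℝ} (hc : 0 ≤ c)
    (h1 : (c • 1 - D).PosSemidef) (h2 : (c • 1 + D).PosSemidef) : ‖D‖ ≤ c := by
  have hq : ∀ z : Fin d → ℝ,
      |z ⬝ᵥ D *ᵥ z| ≤ c * ‖(WithLp.equiv 2 (Fin d → ℝ)).symm z‖ ^ 2 := by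
    intro z
    have hs : star z = z := funext fun i => star_trivial _
    have e1 := h1.dotProduct_mulVec_nonneg z
    have e2 := h2.dotProduct_mulVec_nonneg z
    rw [hs, sub_mulVec, dotProduct_sub, smul_mulVec, one_mulVec, dotProduct_smul,
      smul_eq_mul, dot_self_eq_norm_sq] at e1
    rw [hs, add_mulVec, dotProduct_add, smul_mulVec, one_mulVec, dotProduct_smul,
      smul_eq_mul, dot_self_eq_norm_sq] at e2
    rw [abs_le]
    constructor <;> linarith
  have hDt : Dᵀ = D := by
    have h' : Dᴴ = Dᵀ := by ext i j; simp [conjTranspose_apply]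
    rw [← h', hD.eq]
  have hsym : ∀ y z : Fin d → ℝ, y ⬝ᵥ D *ᵥ z = z ⬝ᵥ D *ᵥ y := by
    intro y z
    rw [dotProduct_mulVec y D z, ← Matrix.mulVec_transpose, hDt, dotProduct_comm]
  rw [l2_opNorm_def]
  refine ContinuousLinearMap.opNorm_le_bound _ hc fun x => ?_
  set xf : Fin d → ℝ := WithLp.equiv 2 (Fin d → ℝ) x with hxf
  show ‖(WithLp.equiv 2 (Fin d → ℝ)).symm (D *ᵥ xf)‖ ≤ c * ‖x‖
  set y : Fin d → ℝ := D *ᵥ xf with hy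
  set b : ℝ := ‖(WithLp.equiv 2 (Fin d → ℝ)).symm y‖ with hb
  set a : ℝ := ‖x‖ with ha
  by_cases hb0 : b = 0
  · rw [hb0]; positivity
  have hbpos : 0 < b := lt_of_le_of_ne (norm_nonneg _) (Ne.symm hb0)
  have hapos : 0 < a := by
    rcases (norm_nonneg x).lt_or_eq with h | h
    · exact h
    · exfalso
      have hx0 : x = 0 := by rwa [eq_comm, norm_eq_zero] at h
      apply hb0
      rw [hb, hy, hxf, hx0]
      simp
  set z : Fin d → ℝ := (a / b) • y with hz
  have hyy : y ⬝ᵥ y = b ^ 2 := dot_self_eq_norm_sq y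
  have hzDx : z ⬝ᵥ D *ᵥ xf = (a / b) * b ^ 2 := by
    rw [hz, smul_dotProduct, ← hy, hyy, smul_eq_mul]
  have expand : (xf + z) ⬝ᵥ D *ᵥ (xf + z) - (xf - z) ⬝ᵥ D *ᵥ (xf - z)
      = 4 * (z ⬝ᵥ D *ᵥ xf) := by
    rw [Matrix.mulVec_add, Matrix.mulVec_sub, dotProduct_add, dotProduct_sub,
      add_dotProduct, add_dotProduct, sub_dotProduct, sub_dotProduct,
      hsym xf z]
    ring
  have hexz : (WithLp.equiv 2 (Fin d → ℝ)).symm (xf + z)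
      = (WithLp.equiv 2 (Fin d → ℝ)).symm xf + (WithLp.equiv 2 (Fin d → ℝ)).symm z := rfl
  have hexz' : (WithLp.equiv 2 (Fin d → ℝ)).symm (xf - z)
      = (WithLp.equiv 2 (Fin d → ℝ)).symm xf - (WithLp.equiv 2 (Fin d → ℝ)).symm z := rfl
  have hnormz : ‖(WithLp.equiv 2 (Fin d → ℝ)).symm z‖ = a := by
    have : (WithLp.equiv 2 (Fin d → ℝ)).symm z
        = (a / b) • (WithLp.equiv 2 (Fin d → ℝ)).symm y := rfl
    rw [this, norm_smul, Real.norm_eq_abs, abs_of_nonneg (by positivity), ← hb]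
    field_simp
  have hnormx : ‖(WithLp.equiv 2 (Fin d → ℝ)).symm xf‖ = a := rfl
  have par : ‖(WithLp.equiv 2 (Fin d → ℝ)).symm (xf + z)‖ ^ 2
      + ‖(WithLp.equiv 2 (Fin d → ℝ)).symm (xf - z)‖ ^ 2 = 2 * a ^ 2 + 2 * a ^ 2 := by
    rw [hexz, hexz', norm_add_sq_real, norm_sub_sq_real, hnormx, hnormz]
    ring
  have q1 := (abs_le.mp (hq (xf + z))).2
  have q2 := (abs_le.mp (hq (xf - z))).1
  have main : 4 * ((a / b) * b ^ 2) ≤ c * (2 * a ^ 2 + 2 * a ^ 2) := by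
    rw [← hzDx, ← expand, ← par]
    nlinarith [q1, q2]
  have h4 : 4 * (a * b) ≤ 4 * (c * a ^ 2) := by
    have : (a / b) * b ^ 2 = a * b := by field_simp
    nlinarith [main, this]
  nlinarith [h4, hapos]

lemma scalar_inv {X : Mat} (hX : X.PosDef) {c : ℝ} (hc : 0 < c)
    (h : (X - c • 1).PosSemidef) : (c⁻¹ • 1 - X⁻¹).PosSemidef := by
  have hXd : IsUnit X.det := hX.det_pos.ne'.isUnit
  have hT : (c⁻¹ • X).PosDef := posdef_smul hX (inv_pos.mpr hc)
  have hT1 : (c⁻¹ • X - 1).PosSemidef := by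
    have e : c⁻¹ • X - 1 = c⁻¹ • (X - c • 1) := by
      rw [smul_sub, smul_smul, inv_mul_cancel₀ hc.ne', one_smul]
    rw [e]
    exact psd_smul h (by positivity)
  have h2 := inv_sub_one hT hT1
  have hTinv : (c⁻¹ • X)⁻¹ = c • X⁻¹ := by
    apply Matrix.inv_eq_right_inv
    rw [smul_mul_smul_comm, inv_mul_cancel₀ hc.ne', mul_nonsing_inv _ hXd, one_smul]
  rw [hTinv] at h2
  have e2 : c⁻¹ • 1 - X⁻¹ = c⁻¹ • (1 - c • X⁻¹) := by
    rw [smul_sub, smul_smul, inv_mul_cancel₀ hc.ne', one_smul]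
  rw [e2]
  exact psd_smul h2 (by positivity)

lemma key {A₁ A₂ : Mat} (h₁ : A₁.PosSemidef) (h₂ : A₂.PosSemidef) {δ : ℝ} (hδ : 0 ≤ δ)
    (hub : (δ • 1 + (A₁ - A₂)).PosSemidef) :
    ((δ / (1 + δ)) • 1 - ((1 + A₁)⁻¹ - (1 + A₂)⁻¹)).PosSemidef := by
  have hM : (1 + A₁).PosDef := Matrix.PosDef.one.add_posSemidef h₁
  have hN : (1 + A₂).PosDef := Matrix.PosDef.one.add_posSemidef h₂
  set M : Mat := 1 + A₁ with hMdef
  set N : Mat := 1 + A₂ with hNdef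
  have hP : (M + δ • 1).PosDef := hM.add_posSemidef (psd_smul_one hδ)
  set P : Mat := M + δ • 1 with hPdef
  have hMd : IsUnit M.det := hM.det_pos.ne'.isUnit
  have hPd : IsUnit P.det := hP.det_pos.ne'.isUnit
  have step1 : (P - N).PosSemidef := by
    have e : P - N = δ • 1 + (A₁ - A₂) := by rw [hPdef, hMdef, hNdef]; abel
    rw [e]; exact hub
  have step2 : (N⁻¹ - P⁻¹).PosSemidef := inv_antitone hN hP step1
  set X : Mat := M * M + δ • M with hXdef
  have hXP : X = P * M := by rw [hXdef, hPdef, add_mul M (δ • 1) M, smul_mul_assoc, one_mul]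
  have hM2 : (M * M).PosDef := by
    have h' := posdef_conj (Matrix.PosDef.one (n := Fin d) (R := ℝ)) hM.1 hMd
    rwa [mul_one] at h'
  have hX : X.PosDef := hM2.add_posSemidef (psd_smul hM.posSemidef hδ)
  have claim3 : M⁻¹ - P⁻¹ = δ • X⁻¹ := by
    have hXinv : X⁻¹ = M⁻¹ * P⁻¹ := by rw [hXP, Matrix.mul_inv_rev]
    rw [hXinv]
    have e : M⁻¹ * P * P⁻¹ - M⁻¹ * M * P⁻¹ = M⁻¹ - P⁻¹ := by
      rw [mul_assoc, mul_nonsing_inv _ hPd, mul_one, nonsing_inv_mul _ hMd, one_mul]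
    calc M⁻¹ - P⁻¹ = M⁻¹ * P * P⁻¹ - M⁻¹ * M * P⁻¹ := e.symm
      _ = M⁻¹ * (P - M) * P⁻¹ := by rw [mul_sub, sub_mul]
      _ = M⁻¹ * (δ • 1) * P⁻¹ := by rw [hPdef, add_sub_cancel_left]
      _ = δ • (M⁻¹ * P⁻¹) := by
          rw [mul_smul_comm, mul_one, smul_mul_assoc]
  have claim4 : (X - (1 + δ) • 1).PosSemidef := by
    obtain ⟨S, hSdef⟩ : ∃ S, S = h₁.sqrt := ⟨_, rfl⟩
    have hS : S.IsHermitian := by rw [hSdef]; exact h₁.posSemidef_sqrt.1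
    have hSS : S * S = A₁ := by rw [hSdef]; exact h₁.sqrt_mul_self
    have hB : (A₁ + (2 + δ) • 1).PosSemidef := h₁.add (psd_smul_one (by linarith))
    have e : X - (1 + δ) • 1 = S * (A₁ + (2 + δ) • 1) * S := by
      rw [hXdef, hMdef, ← hSS]
      simp only [add_mul, mul_add, smul_add, mul_smul_comm, smul_mul_assoc, smul_smul,
        mul_one, one_mul, add_smul, one_smul, mul_assoc]
      abel_nf
      simp [two_smul, add_smul, smul_add, mul_assoc]
      abel
    rw [e]
    exact psd_conj hB hS
  have claim5 : ((1 + δ)⁻¹ • 1 - X⁻¹).PosSemidef := scalar_inv hX (by linarith) claim4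
  have final : (δ / (1 + δ)) • (1 : Mat) - (M⁻¹ - N⁻¹)
      = δ • ((1 + δ)⁻¹ • 1 - X⁻¹) + (N⁻¹ - P⁻¹) := by
    rw [smul_sub, smul_smul, ← div_eq_mul_inv, ← claim3]
    abel
  rw [final]
  exact (psd_smul claim5 hδ).add step2

theorem main {A₁ A₂ : Mat} (h₁ : A₁.PosSemidef) (h₂ : A₂.PosSemidef) :
    ‖(1 + A₁)⁻¹ - (1 + A₂)⁻¹‖ ≤ ‖A₁ - A₂‖ / (1 + ‖A₁ - A₂‖) := by
  set δ : ℝ := ‖A₁ - A₂‖ with hδdef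
  have hδ : 0 ≤ δ := norm_nonneg _
  have hc : 0 ≤ δ / (1 + δ) := by positivity
  have hM : (1 + A₁).PosDef := Matrix.PosDef.one.add_posSemidef h₁
  have hN : (1 + A₂).PosDef := Matrix.PosDef.one.add_posSemidef h₂
  have hub1 : (δ • 1 + (A₁ - A₂)).PosSemidef := psd_norm_smul_one_add (h₁.1.sub h₂.1)
  have hub2 : (δ • 1 + (A₂ - A₁)).PosSemidef := by
    have h' := psd_norm_smul_one_add (h₂.1.sub h₁.1)
    rwa [norm_sub_rev] at h'
  have k1 := key h₁ h₂ hδ hub1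
  have k2 := key h₂ h₁ hδ hub2
  have hD : ((1 + A₁)⁻¹ - (1 + A₂)⁻¹).IsHermitian := hM.1.inv.sub hN.1.inv
  have k2' : ((δ / (1 + δ)) • 1 + ((1 + A₁)⁻¹ - (1 + A₂)⁻¹)).PosSemidef := by
    have e : (δ / (1 + δ)) • (1 : Mat) + ((1 + A₁)⁻¹ - (1 + A₂)⁻¹)
        = (δ / (1 + δ)) • 1 - ((1 + A₂)⁻¹ - (1 + A₁)⁻¹) := by abel
    rw [e]; exact k2
  exact norm_le_of_sandwich hD hc k1 k2'

end Stmt14Aux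

theorem stmt_14 {d : ℕ} (A₁ A₂ : Matrix (Fin d) (Fin d) ℝ)
    (h₁ : A₁.PosSemidef) (h₂ : A₂.PosSemidef) :
    ‖(1 + A₁)⁻¹ - (1 + A₂)⁻¹‖ ≤ ‖A₁ - A₂‖ / (1 + ‖A₁ - A₂‖) := by
  exact Stmt14Aux.main h₁ h₂
end

section
/- Let Σ ∈ ℝ^{n×k} have orthonormal columns Q (QᵀQ = I), let A ∈ ℝ^{n×n} be symmetric, set T = QᵀAQ and = QTQᵀ. Then for any λ > 0, Tr((A − )(Â + λI)⁻¹) = λ⁻¹ Tr(A − Â). Here (Â + λI)⁻¹ exists since Â is positive semidefinite when A is. -/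
open Matrix

theorem stmt_15 {n k : ℕ} (Q : Matrix (Fin n) (Fin k) ℝ) (hQ : Qᵀ * Q = 1)
    (A : Matrix (Fin n) (Fin n) ℝ) (hA : A.PosSemidef) (l : ℝ) (hl : 0 < l) :
    ((A - Q * (Qᵀ * A * Q) * Qᵀ) * (Q * (Qᵀ * A * Q) * Qᵀ + l • 1)⁻¹).trace
      = l⁻¹ * (A - Q * (Qᵀ * A * Q) * Qᵀ).trace := by
  set T : Matrix (Fin k) (Fin k) ℝ := Qᵀ * A * Q with hTdef
  have hTpsd : T.PosSemidef := by
    have := hA.conjTranspose_mul_mul_same Q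
    simpa [hTdef] using this
  have hone : ((l • 1 : Matrix (Fin k) (Fin k) ℝ)).PosDef := by
    rw [smul_one_eq_diagonal]
    exact posDef_diagonal_iff.mpr (fun i => hl)
  have hTl : (T + l • 1).PosDef := Matrix.PosDef.posSemidef_add hTpsd hone
  have hmul : (T + l • 1) * (T + l • 1)⁻¹ = 1 :=
    mul_nonsing_inv _ (hTl.isUnit.map detMonoidHom)
  set S : Matrix (Fin k) (Fin k) ℝ := -(l⁻¹ • ((T + l • 1)⁻¹ * T)) with hSdef
  have h0 : (T + l • 1) * ((T + l • 1)⁻¹ * T) = T := by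
    rw [← Matrix.mul_assoc, hmul, Matrix.one_mul]
  have hTX : T * ((T + l • 1)⁻¹ * T) = T - l • ((T + l • 1)⁻¹ * T) := by
    rw [add_mul, Matrix.smul_mul, Matrix.one_mul] at h0
    exact eq_sub_of_add_eq h0
  have key : T * S + l • S = -(l⁻¹ • T) := by
    rw [hSdef, mul_neg, smul_neg, mul_smul_comm, hTX, smul_sub, smul_smul,
      inv_mul_cancel₀ hl.ne', one_smul, smul_smul, mul_inv_cancel₀ hl.ne', one_smul]
    abel
  have hright : (Q * T * Qᵀ + l • 1) *
      (l⁻¹ • (1 : Matrix (Fin n) (Fin n) ℝ) + Q * S * Qᵀ) = 1 := by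
    have hQQ : Q * T * Qᵀ * (Q * S * Qᵀ) = Q * (T * S) * Qᵀ := by
      calc Q * T * Qᵀ * (Q * S * Qᵀ) = Q * (T * ((Qᵀ * Q) * (S * Qᵀ))) := by
            simp only [Matrix.mul_assoc]
        _ = Q * (T * S) * Qᵀ := by rw [hQ, Matrix.one_mul]; simp only [Matrix.mul_assoc]
    have hmid : Q * (T * S) * Qᵀ + l • (Q * S * Qᵀ) = -(l⁻¹ • (Q * T * Qᵀ)) := by
      have hsplit : Q * (T * S + l • S) * Qᵀ = Q * (T * S) * Qᵀ + l • (Q * S * Qᵀ) := by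
        rw [Matrix.mul_add, Matrix.add_mul, Matrix.mul_smul, Matrix.smul_mul]
      rw [← hsplit, key]
      rw [Matrix.mul_neg, Matrix.neg_mul, Matrix.mul_smul, Matrix.smul_mul]
    rw [Matrix.mul_add, Matrix.add_mul, Matrix.add_mul, hQQ]
    simp only [Matrix.mul_smul, Matrix.smul_mul, Matrix.mul_one, Matrix.one_mul, smul_smul]
    rw [inv_mul_cancel₀ hl.ne', one_smul]
    rw [add_assoc, add_comm (1 : Matrix (Fin n) (Fin n) ℝ), ← add_assoc, hmid]
    abel
  have hinv : (Q * T * Qᵀ + l • 1)⁻¹ = l⁻¹ • (1 : Matrix (Fin n) (Fin n) ℝ) + Q * S * Qᵀ :=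
    inv_eq_right_inv hright
  have hBQ : Qᵀ * (A - Q * T * Qᵀ) * Q = 0 := by
    have h1 : Qᵀ * (Q * T * Qᵀ) * Q = T := by
      calc Qᵀ * (Q * T * Qᵀ) * Q = Qᵀ * Q * (T * (Qᵀ * Q)) := by simp only [Matrix.mul_assoc]
        _ = T := by rw [hQ, Matrix.one_mul, Matrix.mul_one]
    rw [Matrix.mul_sub, Matrix.sub_mul, h1, hTdef, sub_self]
  rw [hinv, Matrix.mul_add, trace_add]
  have h1 : ((A - Q * T * Qᵀ) * (l⁻¹ • (1 : Matrix (Fin n) (Fin n) ℝ))).trace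
      = l⁻¹ * (A - Q * T * Qᵀ).trace := by
    rw [Matrix.mul_smul, Matrix.mul_one, trace_smul, smul_eq_mul]
  have h2 : ((A - Q * T * Qᵀ) * (Q * S * Qᵀ)).trace = 0 := by
    have hassoc : (A - Q * T * Qᵀ) * (Q * S * Qᵀ) = ((A - Q * T * Qᵀ) * Q * S) * Qᵀ := by
      simp only [Matrix.mul_assoc]
    rw [hassoc, trace_mul_comm, ← Matrix.mul_assoc, ← Matrix.mul_assoc, hBQ,
      Matrix.zero_mul, trace_zero]
  rw [h1, h2, add_zero]
end

section
/- Let A ∈ ℝ^{n×n} be symmetric positive semidefinite, Q ∈ ℝ^{n×k} with orthonormal columns, T = QᵀAQ, Â = QTQᵀ, and λ > 0. Then det(Â + λI) ≤ det(A + λI). -/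
open Matrix

lemma aux_psd_transpose_mul {a b : ℕ} (X : Matrix (Fin a) (Fin b) ℝ) :
    (Xᵀ * X).PosSemidef := by
  simpa [Matrix.conjTranspose_eq_transpose_of_trivial] using
    Matrix.posSemidef_conjTranspose_mul_self X

lemma aux_psd_mul_transpose {a b : ℕ} (X : Matrix (Fin a) (Fin b) ℝ) :
    (X * Xᵀ).PosSemidef := by
  simpa [Matrix.conjTranspose_eq_transpose_of_trivial] using
    Matrix.posSemidef_self_mul_conjTranspose X

lemma aux_one_le_det_one_add {m : ℕ} {M : Matrix (Fin m) (Fin m) ℝ}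
    (hM : M.PosSemidef) : 1 ≤ (1 + M).det := by
  have hH := hM.isHermitian
  have hspec := hH.spectral_theorem
  set U : Matrix (Fin m) (Fin m) ℝ := (hH.eigenvectorUnitary : Matrix (Fin m) (Fin m) ℝ)
    with hUdef
  have hU : U ∈ Matrix.unitaryGroup (Fin m) ℝ := hH.eigenvectorUnitary.2
  have hUU : U * star U = 1 := (Matrix.mem_unitaryGroup_iff).mp hU
  have h1 : (1 : Matrix (Fin m) (Fin m) ℝ) + M
      = U * (1 + diagonal (RCLike.ofReal ∘ hH.eigenvalues)) * star U := by
    rw [Matrix.mul_add, Matrix.add_mul, Matrix.mul_one, hUU]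
    exact congrArg (1 + ·) hspec
  rw [h1, Matrix.det_mul_right_comm, hUU, Matrix.one_mul]
  have h2 : (1 : Matrix (Fin m) (Fin m) ℝ) + diagonal (RCLike.ofReal ∘ hH.eigenvalues)
      = diagonal (fun i => 1 + hH.eigenvalues i) := by
    rw [← Matrix.diagonal_one, Matrix.diagonal_add]
    rfl
  rw [h2, Matrix.det_diagonal]
  have h3 : (1:ℝ) = ∏ _i : Fin m, (1:ℝ) := by simp
  rw [h3]
  refine Finset.prod_le_prod (fun i _ => zero_le_one) (fun i _ => ?_)
  have h4 := hM.eigenvalues_nonneg i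
  linarith

lemma aux_det_le_det_add {m : ℕ} {X S : Matrix (Fin m) (Fin m) ℝ}
    (hX : X.PosDef) (hS : S.PosSemidef) : X.det ≤ (X + S).det := by
  obtain ⟨C, hCC0⟩ : ∃ C : Matrix (Fin m) (Fin m) ℝ, X = Cᴴ * C := by
    open scoped MatrixOrder in
    exact ⟨CFC.sqrt X, by
      have h : (CFC.sqrt X)ᴴ = CFC.sqrt X := (CFC.sqrt_nonneg X).isSelfAdjoint
      rw [h, CFC.sqrt_mul_sqrt_self X hX.posSemidef.nonneg]⟩
  have hCC : X = Cᵀ * C := by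
    rw [hCC0, Matrix.conjTranspose_eq_transpose_of_trivial]
  have hdetX : 0 < X.det := hX.det_pos
  have hdetC : C.det * C.det = X.det := by
    rw [hCC, Matrix.det_mul, Matrix.det_transpose]
  have hCunit : IsUnit C.det := by
    refine isUnit_iff_ne_zero.mpr fun h => ?_
    rw [h, mul_zero] at hdetC
    exact hdetX.ne' hdetC.symm
  have hCinv : C * C⁻¹ = 1 := Matrix.mul_nonsing_inv C hCunit
  have hCinv' : C⁻¹ * C = 1 := Matrix.nonsing_inv_mul C hCunit
  have hMps : ((C⁻¹)ᵀ * S * C⁻¹).PosSemidef := by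
    have h := hS.mul_mul_conjTranspose_same (C⁻¹)ᵀ
    simpa [Matrix.conjTranspose_eq_transpose_of_trivial] using h
  have hkey : X + S = Cᵀ * (1 + (C⁻¹)ᵀ * S * C⁻¹) * C := by
    rw [Matrix.mul_add, Matrix.mul_one, Matrix.add_mul, ← hCC]
    congr 1
    symm
    have hCTinv : Cᵀ * (C⁻¹)ᵀ = 1 := by
      rw [← Matrix.transpose_mul, hCinv', Matrix.transpose_one]
    calc Cᵀ * ((C⁻¹)ᵀ * S * C⁻¹) * C
        = (Cᵀ * (C⁻¹)ᵀ) * S * (C⁻¹ * C) := by simp only [Matrix.mul_assoc]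
      _ = S := by rw [hCTinv, hCinv', Matrix.one_mul, Matrix.mul_one]
  rw [hkey, Matrix.det_mul, Matrix.det_mul, Matrix.det_transpose]
  have h1 : 1 ≤ (1 + (C⁻¹)ᵀ * S * C⁻¹).det := aux_one_le_det_one_add hMps
  have hsq : 0 < C.det * C.det := hdetC ▸ hdetX
  nlinarith

theorem stmt_16 {n k : ℕ} (A : Matrix (Fin n) (Fin n) ℝ) (hA : A.PosSemidef)
    (Q : Matrix (Fin n) (Fin k) ℝ) (hQ : Qᵀ * Q = 1) (l : ℝ) (hl : 0 < l) :
    (Q * (Qᵀ * A * Q) * Qᵀ + l • 1).det ≤ (A + l • 1).det := by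
  have hl0 : l ≠ 0 := hl.ne'
  set c : ℝ := l⁻¹ with hc
  have hlc : l * c = 1 := mul_inv_cancel₀ hl0
  obtain ⟨B, hBB0⟩ : ∃ B : Matrix (Fin n) (Fin n) ℝ, A = Bᴴ * B := by
    open scoped MatrixOrder in
    exact ⟨CFC.sqrt A, by
      have h : (CFC.sqrt A)ᴴ = CFC.sqrt A := (CFC.sqrt_nonneg A).isSelfAdjoint
      rw [h, CFC.sqrt_mul_sqrt_self A hA.nonneg]⟩
  have hBB : A = Bᵀ * B := by
    rw [hBB0, Matrix.conjTranspose_eq_transpose_of_trivial]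
  -- rewrite both sides as l • (1 + c • ⬝)
  have e1 : Q * (Qᵀ * A * Q) * Qᵀ + l • 1
      = l • (1 + Q * (c • ((Qᵀ * A * Q) * Qᵀ))) := by
    have h : l • (Q * (c • ((Qᵀ * A * Q) * Qᵀ))) = Q * ((Qᵀ * A * Q) * Qᵀ) := by
      rw [Matrix.mul_smul, smul_smul, hlc, one_smul]
    rw [smul_add, h, add_comm]
    simp only [Matrix.mul_assoc]
  have e2 : A + l • 1 = l • (1 + c • (Bᵀ * B)) := by
    rw [smul_add, smul_smul, hlc, one_smul, ← hBB, add_comm]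
  rw [e1, e2, Matrix.det_smul, Matrix.det_smul]
  have hln : 0 ≤ l ^ Fintype.card (Fin n) := le_of_lt (pow_pos hl _)
  refine mul_le_mul_of_nonneg_left ?_ hln
  -- Weinstein–Aronszajn manipulations
  have d1 : (1 + Q * (c • ((Qᵀ * A * Q) * Qᵀ))).det
      = (1 + c • (Qᵀ * A * Q)).det := by
    rw [Matrix.det_one_add_mul_comm]
    congr 2
    rw [Matrix.smul_mul, Matrix.mul_assoc, hQ, Matrix.mul_one]
  have d2 : (1 + c • (Qᵀ * A * Q)).det
      = (1 + c • (B * (Q * Qᵀ) * Bᵀ)).det := by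
    have h1 : (1 : Matrix (Fin k) (Fin k) ℝ) + c • (Qᵀ * A * Q)
        = 1 + (c • (Qᵀ * Bᵀ)) * (B * Q) := by
      rw [Matrix.smul_mul, hBB]
      congr 2
      simp only [Matrix.mul_assoc]
    have h2 : (B * Q) * (c • (Qᵀ * Bᵀ)) = c • (B * (Q * Qᵀ) * Bᵀ) := by
      rw [Matrix.mul_smul]
      congr 1
      simp only [Matrix.mul_assoc]
    rw [h1, Matrix.det_one_add_mul_comm, h2]
  have d3 : (1 + c • (Bᵀ * B)).det = (1 + c • (B * Bᵀ)).det := by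
    have h1 : (1 : Matrix (Fin n) (Fin n) ℝ) + c • (Bᵀ * B)
        = 1 + (c • Bᵀ) * B := by rw [Matrix.smul_mul]
    have h2 : B * (c • Bᵀ) = c • (B * Bᵀ) := by rw [Matrix.mul_smul]
    rw [h1, Matrix.det_one_add_mul_comm, h2]
  rw [d1, d2, d3]
  -- reduce to a PSD determinant inequality
  have e3 : (1 : Matrix (Fin n) (Fin n) ℝ) + c • (B * (Q * Qᵀ) * Bᵀ)
      = c • (l • 1 + B * (Q * Qᵀ) * Bᵀ) := by
    rw [smul_add, smul_smul, inv_mul_cancel₀ hl0, one_smul]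
  have e4 : (1 : Matrix (Fin n) (Fin n) ℝ) + c • (B * Bᵀ)
      = c • (l • 1 + B * Bᵀ) := by
    rw [smul_add, smul_smul, inv_mul_cancel₀ hl0, one_smul]
  rw [e3, e4, Matrix.det_smul, Matrix.det_smul]
  have hcn : 0 ≤ c ^ Fintype.card (Fin n) := le_of_lt (pow_pos (inv_pos.mpr hl) _)
  refine mul_le_mul_of_nonneg_left ?_ hcn
  set P : Matrix (Fin n) (Fin n) ℝ := Q * Qᵀ with hPdef
  have hPP : P * P = P := by
    rw [hPdef, Matrix.mul_assoc, ← Matrix.mul_assoc Qᵀ, hQ, Matrix.one_mul]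
  have hPsymm : Pᵀ = P := by
    rw [hPdef, Matrix.transpose_mul, Matrix.transpose_transpose]
  have hBP : (B * P * Bᵀ).PosSemidef := by
    have h : B * P * Bᵀ = (B * Q) * (B * Q)ᵀ := by
      rw [Matrix.transpose_mul, hPdef]
      simp only [Matrix.mul_assoc]
    rw [h]
    exact aux_psd_mul_transpose (B * Q)
  have hX : (l • 1 + B * P * Bᵀ).PosDef := by
    have hl1 : (l • (1 : Matrix (Fin n) (Fin n) ℝ)).PosDef := by
      rw [Matrix.smul_one_eq_diagonal]
      exact Matrix.PosDef.diagonal fun _ => hl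
    exact hl1.add_posSemidef hBP
  have hS : (B * (1 - P) * Bᵀ).PosSemidef := by
    have hproj : (1 - P) * (1 - P) = 1 - P := by
      simp only [Matrix.sub_mul, Matrix.mul_sub, Matrix.one_mul, Matrix.mul_one, hPP]
      abel
    have h1Psymm : ((1 - P) : Matrix (Fin n) (Fin n) ℝ)ᵀ = 1 - P := by
      rw [Matrix.transpose_sub, Matrix.transpose_one, hPsymm]
    have h : B * (1 - P) * Bᵀ = (B * (1 - P)) * (B * (1 - P))ᵀ := by
      rw [Matrix.transpose_mul, h1Psymm, Matrix.mul_assoc, Matrix.mul_assoc,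
        ← Matrix.mul_assoc (1 - P), hproj]
    rw [h]
    exact aux_psd_mul_transpose (B * (1 - P))
  have hsum : l • 1 + B * P * Bᵀ + B * (1 - P) * Bᵀ = l • 1 + B * Bᵀ := by
    rw [Matrix.mul_sub, Matrix.sub_mul, Matrix.mul_one]
    abel
  calc (l • 1 + B * P * Bᵀ).det
      ≤ (l • 1 + B * P * Bᵀ + B * (1 - P) * Bᵀ).det := aux_det_le_det_add hX hS
    _ = (l • 1 + B * Bᵀ).det := by rw [hsum]
end

section
/- Let A, Â be symmetric positive semidefinite n×n matrices and λ > 0. Set E = A − Â and F = (A + λI)⁻¹ − (Â + λI)⁻¹. Then ‖(A + λI)F‖₂ ≤ ‖E‖₂/λ and ‖F‖₂ ≤ ‖E‖₂/(λ(λ + ‖E‖₂)). -/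
open Matrix
open scoped Matrix.Norms.L2Operator
open scoped MatrixOrder
open scoped RealInnerProductSpace

variable {n : ℕ}

noncomputable def enormE (y : Fin n → ℝ) : ℝ := ‖(WithLp.equiv 2 (Fin n → ℝ)).symm y‖
lemma enorm_nonneg (y : Fin n → ℝ) : 0 ≤ enormE y := norm_nonneg _
lemma dot_eq_inner (p q : Fin n → ℝ) :
    p ⬝ᵥ q = ⟪(WithLp.equiv 2 (Fin n → ℝ)).symm p, (WithLp.equiv 2 (Fin n → ℝ)).symm q⟫ := by
  simp [dotProduct, PiLp.inner_apply, RCLike.inner_apply, mul_comm]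
lemma dot_self_eq (y : Fin n → ℝ) : y ⬝ᵥ y = enormE y ^ 2 := by
  rw [dot_eq_inner, real_inner_self_eq_norm_sq]; rfl
lemma abs_dot_le (p q : Fin n → ℝ) : |p ⬝ᵥ q| ≤ enormE p * enormE q := by
  rw [dot_eq_inner]; exact abs_real_inner_le_norm _ _
lemma enorm_mulVec_le (B : Matrix (Fin n) (Fin n) ℝ) (y : Fin n → ℝ) :
    enormE (B *ᵥ y) ≤ ‖B‖ * enormE y :=
  B.l2_opNorm_mulVec ((WithLp.equiv 2 (Fin n → ℝ)).symm y)
lemma opnorm_le_of_forall {B : Matrix (Fin n) (Fin n) ℝ} {c : ℝ} (hc : 0 ≤ c)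
    (h : ∀ y : Fin n → ℝ, enormE (B *ᵥ y) ≤ c * enormE y) : ‖B‖ ≤ c := by
  rw [Matrix.l2_opNorm_def]
  exact ContinuousLinearMap.opNorm_le_bound _ hc fun x => h x
lemma psd_dot {S : Matrix (Fin n) (Fin n) ℝ} (hS : S.PosSemidef) (y : Fin n → ℝ) :
    0 ≤ y ⬝ᵥ (S *ᵥ y) := by simpa using hS.dotProduct_mulVec_nonneg y
lemma herm_transpose {S : Matrix (Fin n) (Fin n) ℝ} (hS : S.IsHermitian) : Sᵀ = S := by
  exact Matrix.IsSymm.eq (by simpa [Matrix.conjTranspose, Matrix.star_eq_conjTranspose] using hS)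
lemma psd_cauchy {S : Matrix (Fin n) (Fin n) ℝ} (hS : S.PosSemidef) (p q : Fin n → ℝ) :
    (p ⬝ᵥ (S *ᵥ q)) ^ 2 ≤ (p ⬝ᵥ (S *ᵥ p)) * (q ⬝ᵥ (S *ᵥ q)) := by
  set R := CFC.sqrt S with hR
  have hRt : Rᵀ = R := herm_transpose (CFC.sqrt_nonneg S).posSemidef.isHermitian
  have key : ∀ a b : Fin n → ℝ, a ⬝ᵥ (S *ᵥ b) = (R *ᵥ a) ⬝ᵥ (R *ᵥ b) := by
    intro a b
    rw [← CFC.sqrt_mul_sqrt_self S hS.nonneg, ← Matrix.mulVec_mulVec, Matrix.dotProduct_mulVec]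
    congr 1
    conv_lhs => rw [← hR, ← hRt]
    rw [Matrix.vecMul_transpose]
  rw [key, key, key]
  have h1 := abs_dot_le (R *ᵥ p) (R *ᵥ q)
  have h2 := dot_self_eq (R *ᵥ p)
  have h3 := dot_self_eq (R *ᵥ q)
  calc ((R *ᵥ p) ⬝ᵥ (R *ᵥ q)) ^ 2 ≤ (enormE (R *ᵥ p) * enormE (R *ᵥ q)) ^ 2 := by
        rw [← sq_abs]; exact pow_le_pow_left₀ (abs_nonneg _) h1 2
    _ = _ := by rw [mul_pow, h2, h3]
lemma shift_mulVec_lower {S : Matrix (Fin n) (Fin n) ℝ} (hS : S.PosSemidef) {l : ℝ}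
    (hl : 0 < l) (y : Fin n → ℝ) :
    l * enormE y ≤ enormE ((S + l • 1) *ᵥ y) := by
  have h1 : y ⬝ᵥ ((S + l • 1) *ᵥ y) = y ⬝ᵥ (S *ᵥ y) + l * (y ⬝ᵥ y) := by
    simp [Matrix.add_mulVec, Matrix.smul_mulVec, dotProduct_add, dotProduct_smul,
      smul_eq_mul]
  have h2 : l * enormE y ^ 2 ≤ y ⬝ᵥ ((S + l • 1) *ᵥ y) := by
    rw [h1, ← dot_self_eq]; have := psd_dot hS y; linarith
  have h3 : y ⬝ᵥ ((S + l • 1) *ᵥ y) ≤ enormE y * enormE ((S + l • 1) *ᵥ y) :=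
    le_trans (le_abs_self _) (abs_dot_le _ _)
  rcases eq_or_lt_of_le (enorm_nonneg y) with h | h
  · rw [← h, mul_zero]; exact enorm_nonneg _
  · nlinarith [le_trans h2 h3]
lemma shift_posDef {S : Matrix (Fin n) (Fin n) ℝ} {l : ℝ} (hS : S.PosSemidef) (hl : 0 < l) :
    (S + l • 1).PosDef := by
  refine Matrix.PosDef.posSemidef_add hS ?_
  rw [Matrix.smul_one_eq_diagonal]
  exact Matrix.PosDef.diagonal fun _ => hl
lemma shift_mul_inv {S : Matrix (Fin n) (Fin n) ℝ} {l : ℝ} (hS : S.PosSemidef) (hl : 0 < l) :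
    (S + l • 1) * (S + l • 1)⁻¹ = 1 :=
  Matrix.mul_nonsing_inv _ (shift_posDef hS hl).det_pos.ne'.isUnit
lemma shift_inv_norm {S : Matrix (Fin n) (Fin n) ℝ} {l : ℝ} (hS : S.PosSemidef) (hl : 0 < l) :
    ‖(S + l • 1)⁻¹‖ ≤ 1 / l := by
  refine opnorm_le_of_forall (by positivity) fun y => ?_
  have key : (S + l • 1) *ᵥ ((S + l • 1)⁻¹ *ᵥ y) = y := by
    rw [Matrix.mulVec_mulVec, shift_mul_inv hS hl, Matrix.one_mulVec]
  have := shift_mulVec_lower hS hl ((S + l • 1)⁻¹ *ᵥ y)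
  rw [key] at this
  rw [div_mul_eq_mul_div, le_div_iff₀ hl]
  linarith
lemma enorm_sq_le_iff {a b : ℝ} (hb : 0 ≤ b) (h : a ^ 2 ≤ b ^ 2) (ha : 0 ≤ a) : a ≤ b := by
  nlinarith
lemma unitary_norm_le {U : Matrix (Fin n) (Fin n) ℝ} (hU : Uᵀ * U = 1) : ‖U‖ ≤ 1 := by
  refine opnorm_le_of_forall zero_le_one fun y => ?_
  rw [one_mul]
  refine enorm_sq_le_iff (enorm_nonneg _) ?_ (enorm_nonneg _)
  rw [← dot_self_eq, ← dot_self_eq]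
  have e : y ⬝ᵥ (Uᵀ *ᵥ (U *ᵥ y)) = (U *ᵥ y) ⬝ᵥ (U *ᵥ y) := by
    rw [Matrix.dotProduct_mulVec, Matrix.vecMul_transpose]
  rw [← e, Matrix.mulVec_mulVec, hU, Matrix.one_mulVec]
lemma diagonal_norm_le {g : Fin n → ℝ} {c : ℝ} (hc : 0 ≤ c) (h : ∀ i, |g i| ≤ c) :
    ‖(Matrix.diagonal g : Matrix (Fin n) (Fin n) ℝ)‖ ≤ c := by
  refine opnorm_le_of_forall hc fun y => ?_
  refine enorm_sq_le_iff (mul_nonneg hc (enorm_nonneg _)) ?_ (enorm_nonneg _)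
  rw [← dot_self_eq, mul_pow, ← dot_self_eq]
  simp only [dotProduct, Matrix.mulVec_diagonal]
  rw [Finset.mul_sum]
  refine Finset.sum_le_sum fun i _ => ?_
  have h2 : g i ^ 2 ≤ c ^ 2 := by nlinarith [h i, abs_nonneg (g i), sq_abs (g i)]
  nlinarith [mul_le_mul_of_nonneg_right h2 (mul_self_nonneg (y i))]
lemma scalar_key {l d a t : ℝ} (hl : 0 < l) (hd : 0 ≤ d) (ha : 0 ≤ a)
    (h1 : t * (l + a) * l ≤ d) (h2 : t * l * (l + a) ≤ a) :
    t ≤ d / (l * (l + d)) := by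
  rcases le_or_gt t 0 with ht | ht
  · exact le_trans ht (by positivity)
  · rw [le_div_iff₀ (by positivity)]
    rcases le_total a d with had | had
    · have h3 : t * l * (l + a) * (l + d) ≤ a * (l + d) :=
        mul_le_mul_of_nonneg_right h2 (by positivity)
      have h4 : a * (l + d) ≤ d * (l + a) := by nlinarith
      have h5 : t * (l * (l + d)) * (l + a) ≤ d * (l + a) := by nlinarith
      exact le_of_mul_le_mul_right h5 (by positivity)
    · have h6 : t * (l * (l + d)) ≤ t * ((l + a) * l) := by
        apply mul_le_mul_of_nonneg_left _ ht.le
        nlinarith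
      calc t * (l * (l + d)) ≤ t * ((l + a) * l) := h6
        _ = t * (l + a) * l := by ring
        _ ≤ d := h1

theorem part2 (A Ah : Matrix (Fin n) (Fin n) ℝ)
    (hA : A.PosSemidef) (hAh : Ah.PosSemidef) (l : ℝ) (hl : 0 < l) :
    ‖(A + l • 1)⁻¹ - (Ah + l • 1)⁻¹‖ ≤ ‖A - Ah‖ / (l * (l + ‖A - Ah‖)) := by
  set M := A + l • (1 : Matrix (Fin n) (Fin n) ℝ) with hMdef
  set Mh := Ah + l • (1 : Matrix (Fin n) (Fin n) ℝ) with hMhdef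
  set d := ‖A - Ah‖ with hddef
  have hd : 0 ≤ d := norm_nonneg _
  set c := d / (l * (l + d)) with hcdef
  have hc : 0 ≤ c := by positivity
  have hF : (M⁻¹ - Mh⁻¹).IsHermitian :=
    ((shift_posDef hA hl).isHermitian.inv).sub ((shift_posDef hAh hl).isHermitian.inv)
  -- eigenvalue bound
  have heig : ∀ i, |hF.eigenvalues i| ≤ c := by
    intro i
    set x : Fin n → ℝ := ⇑(hF.eigenvectorBasis i) with hxdef
    set t := hF.eigenvalues i with htdef
    have hx1 : enormE x = 1 := hF.eigenvectorBasis.orthonormal.1 i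
    have hxx : x ⬝ᵥ x = 1 := by rw [dot_self_eq, hx1]; norm_num
    have hxF : (M⁻¹ - Mh⁻¹) *ᵥ x = t • x := hF.mulVec_eigenvectorBasis i
    set u := M⁻¹ *ᵥ x with hudef
    set v := Mh⁻¹ *ᵥ x with hvdef
    have huv : u - v = t • x := by rw [hudef, hvdef, ← Matrix.sub_mulVec]; exact hxF
    have hvmu : v - u = (-t) • x := by
      rw [← neg_sub u v, huv, neg_smul]
    have hMu : M *ᵥ u = x := by
      rw [hudef, Matrix.mulVec_mulVec, shift_mul_inv hA hl, Matrix.one_mulVec]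
    have hMhv : Mh *ᵥ v = x := by
      rw [hvdef, Matrix.mulVec_mulVec, shift_mul_inv hAh hl, Matrix.one_mulVec]
    have hnu : enormE u ≤ 1 / l := by
      calc enormE u ≤ ‖M⁻¹‖ * enormE x := enorm_mulVec_le _ _
        _ = ‖M⁻¹‖ := by rw [hx1, mul_one]
        _ ≤ 1 / l := shift_inv_norm hA hl
    have hnv : enormE v ≤ 1 / l := by
      calc enormE v ≤ ‖Mh⁻¹‖ * enormE x := enorm_mulVec_le _ _
        _ = ‖Mh⁻¹‖ := by rw [hx1, mul_one]
        _ ≤ 1 / l := shift_inv_norm hAh hl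
    set a := x ⬝ᵥ (A *ᵥ x) with hadef
    set ah := x ⬝ᵥ (Ah *ᵥ x) with hahdef
    have ha : 0 ≤ a := psd_dot hA x
    have hah : 0 ≤ ah := psd_dot hAh x
    have hMx : x ⬝ᵥ (M *ᵥ x) = a + l := by
      rw [hMdef, Matrix.add_mulVec, Matrix.smul_mulVec, Matrix.one_mulVec,
        dotProduct_add, dotProduct_smul, smul_eq_mul, hxx, mul_one]
    have hMhx : x ⬝ᵥ (Mh *ᵥ x) = ah + l := by
      rw [hMhdef, Matrix.add_mulVec, Matrix.smul_mulVec, Matrix.one_mulVec,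
        dotProduct_add, dotProduct_smul, smul_eq_mul, hxx, mul_one]
    have hMMh : A - Ah = M - Mh := by rw [hMdef, hMhdef]; abel
    -- key dot identities
    have K1 : x ⬝ᵥ ((A - Ah) *ᵥ u) = (-t) * (ah + l) := by
      have e1 : (A - Ah) *ᵥ u = Mh *ᵥ ((-t) • x) := by
        rw [hMMh, Matrix.sub_mulVec, hMu, ← hvmu, Matrix.mulVec_sub, hMhv]
      rw [e1, Matrix.mulVec_smul, dotProduct_smul, smul_eq_mul, hMhx]
    have K2 : x ⬝ᵥ ((A - Ah) *ᵥ v) = (-t) * (a + l) := by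
      have e1 : (A - Ah) *ᵥ v = M *ᵥ ((-t) • x) := by
        rw [hMMh, Matrix.sub_mulVec, hMhv, ← hvmu, Matrix.mulVec_sub, hMu]
      rw [e1, Matrix.mulVec_smul, dotProduct_smul, smul_eq_mul, hMx]
    -- abs bounds
    have habs : ∀ w : Fin n → ℝ, enormE w ≤ 1 / l → |x ⬝ᵥ ((A - Ah) *ᵥ w)| ≤ d / l := by
      intro w hw
      calc |x ⬝ᵥ ((A - Ah) *ᵥ w)| ≤ enormE x * enormE ((A - Ah) *ᵥ w) := abs_dot_le _ _
        _ = enormE ((A - Ah) *ᵥ w) := by rw [hx1, one_mul]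
        _ ≤ ‖A - Ah‖ * enormE w := enorm_mulVec_le _ _
        _ ≤ d * (1 / l) := mul_le_mul_of_nonneg_left hw (norm_nonneg _)
        _ = d / l := by ring
    have F1 : |t| * (ah + l) ≤ d / l := by
      have := habs u hnu
      rw [K1, abs_mul, abs_neg, abs_of_nonneg (by linarith : (0:ℝ) ≤ ah + l)] at this
      exact this
    have F2 : |t| * (a + l) ≤ d / l := by
      have := habs v hnv
      rw [K2, abs_mul, abs_neg, abs_of_nonneg (by linarith : (0:ℝ) ≤ a + l)] at this
      exact this
    -- Cauchy-Schwarz lower bounds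
    have F3 : 1 ≤ (ah + l) * (x ⬝ᵥ v) := by
      have hcs := psd_cauchy (shift_posDef hAh hl).posSemidef x v
      rw [hMhv, hxx, hMhx] at hcs
      rw [dotProduct_comm v x] at hcs
      simpa using hcs
    have F4 : 1 ≤ (a + l) * (x ⬝ᵥ u) := by
      have hcs := psd_cauchy (shift_posDef hA hl).posSemidef x u
      rw [hMu, hxx, hMx] at hcs
      rw [dotProduct_comm u x] at hcs
      simpa using hcs
    have F5 : (x ⬝ᵥ u) * l ≤ 1 := by
      rw [← le_div_iff₀ hl]
      calc x ⬝ᵥ u ≤ |x ⬝ᵥ u| := le_abs_self _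
        _ ≤ enormE x * enormE u := abs_dot_le _ _
        _ = enormE u := by rw [hx1, one_mul]
        _ ≤ 1 / l := hnu
    have F6 : (x ⬝ᵥ v) * l ≤ 1 := by
      rw [← le_div_iff₀ hl]
      calc x ⬝ᵥ v ≤ |x ⬝ᵥ v| := le_abs_self _
        _ ≤ enormE x * enormE v := abs_dot_le _ _
        _ = enormE v := by rw [hx1, one_mul]
        _ ≤ 1 / l := hnv
    have F7 : x ⬝ᵥ u - x ⬝ᵥ v = t := by
      rw [← dotProduct_sub, huv, dotProduct_smul, smul_eq_mul, hxx, mul_one]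
    -- sides
    have side1 : t ≤ c := by
      rcases le_or_gt t 0 with h | h
      · exact le_trans h hc
      · refine scalar_key hl hd hah ?_ ?_
        · have F1' := (le_div_iff₀ hl).mp F1
          rw [abs_of_pos h] at F1'
          calc t * (l + ah) * l = t * (ah + l) * l := by ring
            _ ≤ d := F1'
        · nlinarith [mul_le_mul_of_nonneg_right F5 (by linarith : (0:ℝ) ≤ l + ah),
            mul_le_mul_of_nonneg_right F3 hl.le, F7]
    have side2 : -t ≤ c := by
      rcases le_or_gt (-t) 0 with h | h
      · exact le_trans h hc
      · refine scalar_key hl hd ha ?_ ?_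
        · have F2' := (le_div_iff₀ hl).mp F2
          rw [abs_of_neg (by linarith : t < 0)] at F2'
          calc (-t) * (l + a) * l = (-t) * (a + l) * l := by ring
            _ ≤ d := F2'
        · nlinarith [mul_le_mul_of_nonneg_right F6 (by linarith : (0:ℝ) ≤ l + a),
            mul_le_mul_of_nonneg_right F4 hl.le, F7]
    exact abs_le.mpr ⟨by linarith, side1⟩
  -- assemble via spectral theorem
  have hspec := hF.spectral_theorem
  set U := (hF.eigenvectorUnitary : Matrix (Fin n) (Fin n) ℝ) with hUdef
  have hstar : star U = Uᵀ := by
    ext i j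
    simp [Matrix.star_eq_conjTranspose, Matrix.conjTranspose_apply]
  have hU1 : Uᵀ * U = 1 := by
    rw [← hstar]
    exact Matrix.mem_unitaryGroup_iff'.mp hF.eigenvectorUnitary.2
  have hU2 : (Uᵀ)ᵀ * Uᵀ = 1 := by
    rw [Matrix.transpose_transpose, ← hstar]
    exact Matrix.mem_unitaryGroup_iff.mp hF.eigenvectorUnitary.2
  have hDnorm : ‖(Matrix.diagonal (RCLike.ofReal ∘ hF.eigenvalues) :
      Matrix (Fin n) (Fin n) ℝ)‖ ≤ c := by
    refine diagonal_norm_le hc fun i => ?_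
    simpa [RCLike.ofReal_real_eq_id] using heig i
  calc ‖M⁻¹ - Mh⁻¹‖
      = ‖U * Matrix.diagonal (RCLike.ofReal ∘ hF.eigenvalues) * star U‖ := by rw [Unitary.conjStarAlgAut_apply] at hspec; exact congrArg norm hspec
    _ ≤ ‖U * Matrix.diagonal (RCLike.ofReal ∘ hF.eigenvalues)‖ * ‖star U‖ :=
        Matrix.l2_opNorm_mul _ _
    _ ≤ ‖U‖ * ‖Matrix.diagonal (RCLike.ofReal ∘ hF.eigenvalues)‖ * ‖star U‖ :=
        mul_le_mul_of_nonneg_right (Matrix.l2_opNorm_mul _ _) (norm_nonneg _)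
    _ ≤ 1 * c * 1 := by
        refine mul_le_mul (mul_le_mul (unitary_norm_le hU1) hDnorm (norm_nonneg _)
          zero_le_one) ?_ (norm_nonneg _) (by linarith)
        rw [hstar]
        exact unitary_norm_le hU2
    _ = c := by ring

-- Part 1
theorem part1 (A Ah : Matrix (Fin n) (Fin n) ℝ)
    (hA : A.PosSemidef) (hAh : Ah.PosSemidef) (l : ℝ) (hl : 0 < l) :
    ‖(A + l • 1) * ((A + l • 1)⁻¹ - (Ah + l • 1)⁻¹)‖ ≤ ‖A - Ah‖ / l := by
  have hid : (A + l • 1) * ((A + l • 1)⁻¹ - (Ah + l • 1)⁻¹) = (Ah - A) * (Ah + l • 1)⁻¹ := by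
    rw [mul_sub, shift_mul_inv hA hl]
    have e1 : A + l • 1 = (Ah + l • (1 : Matrix (Fin n) (Fin n) ℝ)) + (A - Ah) := by abel
    rw [e1, add_mul, shift_mul_inv hAh hl,
      show Ah - A = -(A - Ah) by abel, neg_mul]
    abel
  rw [hid]
  calc ‖(Ah - A) * (Ah + l • 1)⁻¹‖ ≤ ‖Ah - A‖ * ‖(Ah + l • 1)⁻¹‖ := Matrix.l2_opNorm_mul _ _
    _ ≤ ‖A - Ah‖ * (1 / l) := by
        rw [norm_sub_rev]
        exact mul_le_mul_of_nonneg_left (shift_inv_norm hAh hl) (norm_nonneg _)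
    _ = ‖A - Ah‖ / l := by ring


theorem stmt_17 {n : ℕ} (A Ah : Matrix (Fin n) (Fin n) ℝ)
    (hA : A.PosSemidef) (hAh : Ah.PosSemidef) (l : ℝ) (hl : 0 < l) :
    ‖(A + l • 1) * ((A + l • 1)⁻¹ - (Ah + l • 1)⁻¹)‖ ≤ ‖A - Ah‖ / l ∧
    ‖(A + l • 1)⁻¹ - (Ah + l • 1)⁻¹‖ ≤ ‖A - Ah‖ / (l * (l + ‖A - Ah‖)) := by
  exact ⟨part1 A Ah hA hAh l hl, part2 A Ah hA hAh l hl⟩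
end
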